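/- Let d be a positive integer and let p : ℝ^d → ℝ be a probability density function (nonnegative, measurable, integrating to 1) that is square-integrable. Let X and Y be independent random vectors in ℝ^d each with density p, and let C_d denote the Lebesgue measure of the unit ball in ℝ^d. Then lim_{ε → 0⁺} P(‖X − Y‖ ≤ ε) / (C_d · ε^d) = ∫_{ℝ^d} p(x)² dx. -/

import Mathlib

open MeasureTheory ProbabilityTheory Filter Metric
open scoped ENNReal Topology

/-!
Let `F(t) = ∫ p(x) p(x + t) dx` be the autocorrelation of `p`. By Fubini and translation
invariance of Lebesgue measure, `P(‖X − Y‖ ≤ ε) = ∫_{‖t‖ ≤ ε} F(t) dt`, and the ball of radius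
`ε` has volume `C_d ε^d`, so the ratio in question is the average of `F` over that ball. Since
`p ∈ L²`, `F(t) = ⟪p, p(· + t)⟫_{L²}` is continuous (translation acts continuously on `L²`),
hence the averages tend to `F(0) = ∫ p²`.
-/

noncomputable def autocorrelation {G : Type*} [MeasurableSpace G] [Add G] (μ : Measure G)
    (f : G → ℝ) (t : G) : ℝ :=
  ∫ x, f x * f (x + t) ∂μ

theorem continuous_autocorrelation {G : Type*} [AddCommGroup G] [TopologicalSpace G]
    [IsTopologicalAddGroup G] [MeasurableSpace G] [BorelSpace G] {μ : Measure G}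
    [IsLocallyFiniteMeasure μ] [μ.InnerRegularCompactLTTop] [μ.IsAddLeftInvariant]
    {f : G → ℝ} (hf : MemLp f 2 μ) : Continuous (autocorrelation μ f) := by
  have h_inner : autocorrelation μ f = fun t =>
      inner ℝ (hf.toLp f) (DomAddAct.mk t +ᵥ hf.toLp f) := by
    ext t
    rw [DomAddAct.mk_vadd_toLp, L2.inner_def, autocorrelation]
    refine integral_congr_ae ?_
    filter_upwards [hf.coeFn_toLp, MemLp.coeFn_toLp (f := fun x => f (t +ᵥ x)) _] with x h1 h2
    rw [h1, h2, vadd_eq_add, add_comm t, real_inner_eq_re_inner]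
    simp [mul_comm]
  have : Fact ((2 : ℝ≥0∞) ≠ ∞) := ⟨ENNReal.ofNat_ne_top⟩
  rw [h_inner]
  exact continuous_const.inner (DomAddAct.continuous_mk.vadd continuous_const)

section Collision

variable {E : Type*} [NormedAddCommGroup E] [MeasurableSpace E] [BorelSpace E]
  {μ : Measure E} [μ.IsAddLeftInvariant]

theorem withDensity_closedBall_eq_setLIntegral_add {q : E → ℝ≥0∞} (hq : Measurable q)
    (x : E) (ε : ℝ) :
    μ.withDensity q (closedBall x ε) = ∫⁻ t in closedBall 0 ε, q (x + t) ∂μ := by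
  have h_pre : (x + ·) ⁻¹' closedBall x ε = closedBall 0 ε := by
    ext t; simp
  rw [withDensity_apply _ measurableSet_closedBall, ← h_pre,
    (measurePreserving_add_left μ x).setLIntegral_comp_preimage measurableSet_closedBall hq]

variable [SecondCountableTopology E] [SFinite μ]

theorem prod_withDensity_dist_le {q : E → ℝ≥0∞} (hq : Measurable q) (ε : ℝ) :
    ((μ.withDensity q).prod (μ.withDensity q)) {z | dist z.1 z.2 ≤ ε} =
      ∫⁻ t in closedBall 0 ε, ∫⁻ x, q x * q (x + t) ∂μ ∂μ := by
  have h_meas : MeasurableSet {z : E × E | dist z.1 z.2 ≤ ε} :=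
    measurableSet_le (measurable_fst.dist measurable_snd) measurable_const
  have h_add : Measurable fun z : E × E => q (z.1 + z.2) :=
    hq.comp (measurable_fst.add measurable_snd)
  calc ((μ.withDensity q).prod (μ.withDensity q)) {z | dist z.1 z.2 ≤ ε}
      = ∫⁻ x, μ.withDensity q (closedBall x ε) ∂μ.withDensity q := by
        rw [Measure.prod_apply h_meas]
        refine lintegral_congr fun x => congr_arg _ ?_
        ext y; simp [dist_comm]
    _ = ∫⁻ x, q x * ∫⁻ t in closedBall 0 ε, q (x + t) ∂μ ∂μ := by
        simp_rw [withDensity_closedBall_eq_setLIntegral_add hq]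
        exact lintegral_withDensity_eq_lintegral_mul _ hq h_add.lintegral_prod_right'
    _ = ∫⁻ x, ∫⁻ t in closedBall 0 ε, q x * q (x + t) ∂μ ∂μ :=
        lintegral_congr fun x => (lintegral_const_mul _ (hq.comp (measurable_const_add x))).symm
    _ = ∫⁻ t in closedBall 0 ε, ∫⁻ x, q x * q (x + t) ∂μ ∂μ :=
        lintegral_lintegral_swap ((hq.comp measurable_fst).mul h_add).aemeasurable

theorem measureReal_prod_withDensity_dist_le {p : E → ℝ} (hp_meas : Measurable p)
    (hp_nonneg : ∀ x, 0 ≤ p x) (hp : MemLp p 2 μ) (ε : ℝ) :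
    (((μ.withDensity fun x => ENNReal.ofReal (p x)).prod
        (μ.withDensity fun x => ENNReal.ofReal (p x))).real {z | dist z.1 z.2 ≤ ε}) =
      ∫ t in closedBall 0 ε, autocorrelation μ p t ∂μ := by
  have h_lintegral : ∀ t, ∫⁻ x, ENNReal.ofReal (p x) * ENNReal.ofReal (p (x + t)) ∂μ =
      ENNReal.ofReal (autocorrelation μ p t) := by
    intro t
    have h_int : Integrable (fun x => p x * p (x + t)) μ :=
      hp.integrable_mul (hp.comp_measurePreserving (measurePreserving_add_right μ t))
    rw [autocorrelation, ofReal_integral_eq_lintegral_ofReal h_int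
      (Eventually.of_forall fun x => mul_nonneg (hp_nonneg x) (hp_nonneg _))]
    simp_rw [ENNReal.ofReal_mul (hp_nonneg _)]
  have h_sm : StronglyMeasurable (autocorrelation μ p) :=
    ((hp_meas.comp measurable_snd).mul
      (hp_meas.comp (measurable_snd.add measurable_fst))).stronglyMeasurable.integral_prod_right'
  have h_nonneg : ∀ t, 0 ≤ autocorrelation μ p t :=
    fun t => integral_nonneg fun x => mul_nonneg (hp_nonneg x) (hp_nonneg _)
  rw [measureReal_def, prod_withDensity_dist_le hp_meas.ennreal_ofReal,
    integral_eq_lintegral_of_nonneg_ae (Eventually.of_forall h_nonneg) h_sm.aestronglyMeasurable]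
  simp_rw [h_lintegral]

end Collision

theorem ContinuousAt.tendsto_setAverage_closedBall {α : Type*} [PseudoMetricSpace α]
    [ProperSpace α] [MeasurableSpace α] [OpensMeasurableSpace α] {μ : Measure α}
    [IsFiniteMeasureOnCompacts μ] [μ.IsOpenPosMeasure] {F : α → ℝ} {x : α}
    (hF : ContinuousAt F x) (hF_int : LocallyIntegrable F μ) :
    Tendsto (fun ε => ⨍ y in closedBall x ε, F y ∂μ) (𝓝[>] 0) (𝓝 (F x)) := by
  rw [Metric.tendsto_nhds]
  intro δ hδ
  obtain ⟨r, hr, hFr⟩ := Metric.continuousAt_iff.mp hF δ hδ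
  filter_upwards [Ioo_mem_nhdsGT hr] with ε ⟨hε, hεr⟩
  have hμ₀ : μ (closedBall x ε) ≠ 0 := (measure_closedBall_pos μ x hε).ne'
  have hμ₁ : μ (closedBall x ε) ≠ ∞ := measure_closedBall_lt_top.ne
  have h_int := hF_int.integrableOn_isCompact (isCompact_closedBall x ε)
  obtain ⟨y, hy, hy_le⟩ := exists_le_setAverage hμ₀ hμ₁ h_int
  obtain ⟨z, hz, hz_ge⟩ := exists_setAverage_le hμ₀ hμ₁ h_int
  have hFy := hFr (lt_of_le_of_lt hy hεr)
  have hFz := hFr (lt_of_le_of_lt hz hεr)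
  rw [Real.dist_eq, abs_sub_lt_iff] at hFy hFz ⊢
  constructor <;> linarith

theorem ProbabilityTheory.IndepFun.measure_dist_le_eq {Ω E : Type*} [MeasurableSpace Ω]
    {P : Measure Ω} [IsFiniteMeasure P] [PseudoMetricSpace E] [MeasurableSpace E]
    [OpensMeasurableSpace E] [SecondCountableTopology E] {X Y : Ω → E} (hX : Measurable X) (hY : Measurable Y)
    (hXY : IndepFun X Y P) (ε : ℝ) :
    P {ω | dist (X ω) (Y ω) ≤ ε} = ((P.map X).prod (P.map Y)) {z | dist z.1 z.2 ≤ ε} := by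
  rw [← (indepFun_iff_map_prod_eq_prod_map_map hX.aemeasurable hY.aemeasurable).1 hXY,
    Measure.map_apply (hX.prodMk hY)
      (measurableSet_le (measurable_fst.dist measurable_snd) measurable_const)]
  rfl

theorem smallBall_collision_asymptotic_general
    (d : ℕ)
    (p : EuclideanSpace ℝ (Fin d) → ℝ)
    (hp_meas : Measurable p) (hp_nonneg : ∀ x, 0 ≤ p x)
    (hp_sq : Integrable fun x => p x ^ 2)
    (Ω : Type*) [MeasurableSpace Ω] (P : Measure Ω) [IsProbabilityMeasure P]
    (X Y : Ω → EuclideanSpace ℝ (Fin d)) (hX : Measurable X) (hY : Measurable Y)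
    (hindep : IndepFun X Y P)
    (hXd : Measure.map X P = volume.withDensity fun x => ENNReal.ofReal (p x))
    (hYd : Measure.map Y P = volume.withDensity fun x => ENNReal.ofReal (p x))
    (Cd : ℝ)
    (hCd : Cd = (volume (Metric.ball (0 : EuclideanSpace ℝ (Fin d)) 1)).toReal) :
    Tendsto
      (fun ε : ℝ => (P {ω | dist (X ω) (Y ω) ≤ ε}).toReal / (Cd * ε ^ d))
      (nhdsWithin 0 (Set.Ioi 0)) (nhds (∫ x, p x ^ 2)) := by
  have hp : MemLp p 2 volume :=
    (memLp_two_iff_integrable_sq hp_meas.aestronglyMeasurable).2 hp_sq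
  have hF := continuous_autocorrelation hp
  have h_ball : ∀ ε : ℝ, 0 ≤ ε →
      volume.real (closedBall (0 : EuclideanSpace ℝ (Fin d)) ε) = Cd * ε ^ d := by
    intro ε hε
    rw [measureReal_def, Measure.addHaar_closedBall _ _ hε, ENNReal.toReal_mul,
      ENNReal.toReal_ofReal (by positivity), finrank_euclideanSpace_fin, hCd, mul_comm]
  have h_average : ∀ᶠ ε in 𝓝[>] 0, ⨍ t in closedBall 0 ε, autocorrelation volume p t =
      (P {ω | dist (X ω) (Y ω) ≤ ε}).toReal / (Cd * ε ^ d) := by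
    filter_upwards [self_mem_nhdsWithin] with ε hε
    rw [setAverage_eq, hindep.measure_dist_le_eq hX hY, hXd, hYd, ← measureReal_def,
      measureReal_prod_withDensity_dist_le hp_meas hp_nonneg hp, h_ball ε (le_of_lt hε),
      smul_eq_mul, inv_mul_eq_div]
  have h_zero : autocorrelation volume p 0 = ∫ x, p x ^ 2 := by
    simp only [autocorrelation, add_zero, sq]
  rw [← h_zero]
  exact (hF.continuousAt.tendsto_setAverage_closedBall hF.locallyIntegrable).congr' h_average

/-- **Small-ball collision asymptotic for square-integrable densities.**
Let `p` be a square-integrable probability density on `ℝ^d`, let `X, Y` be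
independent random vectors with density `p`, and let `C_d` be the Lebesgue
measure of the unit ball in `ℝ^d`. Then
`P(‖X − Y‖ ≤ ε) / (C_d · ε^d) → ∫ p² ` as `ε → 0⁺`. -/
theorem smallBall_collision_asymptotic
    (d : ℕ) (hd : 0 < d)
    (p : EuclideanSpace ℝ (Fin d) → ℝ)
    (hp_meas : Measurable p) (hp_nonneg : ∀ x, 0 ≤ p x)
    (hp_int : ∫ x, p x = 1)
    (hp_sq : Integrable fun x => p x ^ 2)
    (Ω : Type*) [MeasurableSpace Ω] (P : Measure Ω) [IsProbabilityMeasure P]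
    (X Y : Ω → EuclideanSpace ℝ (Fin d)) (hX : Measurable X) (hY : Measurable Y)
    (hindep : IndepFun X Y P)
    (hXd : Measure.map X P = volume.withDensity fun x => ENNReal.ofReal (p x))
    (hYd : Measure.map Y P = volume.withDensity fun x => ENNReal.ofReal (p x))
    (Cd : ℝ)
    (hCd : Cd = (volume (Metric.ball (0 : EuclideanSpace ℝ (Fin d)) 1)).toReal) :
    Tendsto
      (fun ε : ℝ => (P {ω | dist (X ω) (Y ω) ≤ ε}).toReal / (Cd * ε ^ d))
      (nhdsWithin 0 (Set.Ioi 0)) (nhds (∫ x, p x ^ 2)) :=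
  smallBall_collision_asymptotic_general d p hp_meas hp_nonneg hp_sq Ω P X Y hX hY hindep hXd hYd Cd
    hCd
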